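/- arXiv:math/0305025 — 4 statements merged into one kernel-verified Lean document; each statement's English description precedes it below -/
import Mathlib

section
/- Let h : ℝ₊ → ℝ₊ be a decreasing function with H(x) := ∫_x^∞ h(t) dt finite, and let (u_i)_{i∈ℕ} be a sequence with values in (0,1) such that u_i ≤ m·h(i) for some constant m ≥ 0. Then there exists a constant M ≥ 0 such that for all k, 1 − Π_{i=k}^∞ (1−u_i)/(1+u_i) ≤ M · H(k−1). -/
set_option maxHeartbeats 1000000

open MeasureTheory Finset

private lemma weier (a : ℕ → ℝ) (h0 : ∀ i, 0 ≤ a i) (h1 : ∀ i, a i ≤ 1) (n : ℕ) :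
    1 - ∑ i ∈ range n, (1 - a i) ≤ ∏ i ∈ range n, a i := by
  induction n with
  | zero => simp
  | succ n ih =>
    rw [Finset.sum_range_succ, Finset.prod_range_succ]
    have hP : (0:ℝ) ≤ ∏ i ∈ range n, a i := Finset.prod_nonneg fun i _ => h0 i
    have hS : (0:ℝ) ≤ ∑ i ∈ range n, (1 - a i) :=
      Finset.sum_nonneg fun i _ => by linarith [h1 i]
    nlinarith [h0 n, h1 n]

theorem stmt5 (h : ℝ → ℝ) (hmono : AntitoneOn h (Set.Ici (0:ℝ)))
    (hpos : ∀ x, 0 ≤ h x) (hint : MeasureTheory.IntegrableOn h (Set.Ioi (-1 : ℝ)))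
    (u : ℕ → ℝ) (hu : ∀ i, u i ∈ Set.Ioo (0:ℝ) 1)
    (m : ℝ) (hm : 0 ≤ m) (hbound : ∀ i, u i ≤ m * h i) :
    ∃ M : ℝ, 0 ≤ M ∧ ∀ k : ℕ,
      1 - ∏' i : ℕ, ((1 - u (k + i)) / (1 + u (k + i))) ≤
        M * ∫ t in Set.Ioi ((k : ℝ) - 1), h t := by
  -- integrability on subintervals
  have hintsub : ∀ c : ℝ, -1 ≤ c → IntegrableOn h (Set.Ioi c) :=
    fun c hc => hint.mono_set (Set.Ioi_subset_Ioi hc)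
  have hRHSnn : ∀ c : ℝ, 0 ≤ ∫ t in Set.Ioi c, h t := fun c =>
    integral_nonneg fun t => hpos t
  -- m > 0
  have hm0 : 0 < m := by
    rcases lt_or_eq_of_le hm with hm' | hm'
    · exact hm'
    · exfalso; have := hbound 0; rw [← hm', zero_mul] at this
      exact absurd (hu 0).1 (not_lt.2 this)
  -- h 1 > 0
  have hh1 : 0 < h 1 := by
    have := hbound 1
    have h1 := (hu 1).1
    push_cast at this
    nlinarith
  -- Key: for each k ≥ 1, ∑' i, h (k+i) ≤ ∫_{Ioi (k-1)} h
  have key : ∀ k : ℕ, 1 ≤ k →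
      (Summable fun i : ℕ => h ((k + i : ℕ) : ℝ)) ∧
      (∑' i : ℕ, h ((k + i : ℕ) : ℝ)) ≤ ∫ t in Set.Ioi ((k : ℝ) - 1), h t := by
    intro k hk
    have hx0 : (0:ℝ) ≤ (k:ℝ) - 1 := by
      have : (1:ℝ) ≤ (k:ℝ) := by exact_mod_cast hk
      linarith
    have hsb : ∀ n : ℕ, ∑ i ∈ range n, h ((k + i : ℕ) : ℝ) ≤ ∫ t in Set.Ioi ((k : ℝ) - 1), h t := by
      intro n
      have hmono' : AntitoneOn h (Set.Icc ((k:ℝ) - 1) (((k:ℝ) - 1) + n)) :=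
        hmono.mono (fun x hx => le_trans hx0 hx.1)
      have hs : ∑ i ∈ range n, h (((k:ℝ) - 1) + ((i + 1 : ℕ) : ℝ)) ≤
          ∫ x in ((k:ℝ) - 1)..(((k:ℝ) - 1) + n), h x :=
        hmono'.sum_le_integral
      have heq : ∀ i : ℕ, h ((k + i : ℕ) : ℝ) = h (((k:ℝ) - 1) + ((i + 1 : ℕ) : ℝ)) := by
        intro i; congr 1; push_cast; ring
      rw [Finset.sum_congr rfl fun i _ => heq i]
      refine hs.trans ?_
      rw [intervalIntegral.integral_of_le (le_add_of_nonneg_right (Nat.cast_nonneg n))]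
      apply setIntegral_mono_set (hintsub _ (by linarith))
        (Filter.Eventually.of_forall fun t => hpos t)
      exact Filter.Eventually.of_forall (Set.Ioc_subset_Ioi_self)
    have hsum : Summable fun i : ℕ => h ((k + i : ℕ) : ℝ) :=
      summable_of_sum_range_le (fun i => hpos _) hsb
    exact ⟨hsum, Real.tsum_le_of_sum_range_le (fun i => hpos _) hsb⟩
  -- bound 1 - tprod by 2 * ∑' u (k+i) when summable, else 0
  have main : ∀ k : ℕ, 1 ≤ k →
      1 - (∏' i : ℕ, ((1 - u (k + i)) / (1 + u (k + i)))) ≤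
        (2 * m) * ∫ t in Set.Ioi ((k : ℝ) - 1), h t := by
    intro k hk
    obtain ⟨hsumh, hbint⟩ := key k hk
    set a : ℕ → ℝ := fun i => (1 - u (k + i)) / (1 + u (k + i)) with ha
    have ha0 : ∀ i, 0 ≤ a i := fun i => by
      have := hu (k + i); exact div_nonneg (by linarith [this.2]) (by linarith [this.1])
    have ha1 : ∀ i, a i ≤ 1 := fun i => by
      have := hu (k + i)
      rw [div_le_one (by linarith [this.1])]; linarith [this.1]
    -- 1 - a i ≤ 2 * u (k+i) ≤ 2 m h(k+i)
    have hub : ∀ i, 1 - a i ≤ 2 * m * h ((k + i : ℕ) : ℝ) := by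
      intro i
      have h1 := hu (k + i)
      have hb := hbound (k + i)
      have hne : (1:ℝ) + u (k + i) ≠ 0 := by linarith [h1.1]
      have heq : 1 - a i = 2 * u (k + i) / (1 + u (k + i)) := by
        rw [ha]
        rw [one_sub_div hne]
        congr 1
        ring
      rw [heq]
      have h2 : 2 * u (k + i) / (1 + u (k + i)) ≤ 2 * u (k + i) :=
        div_le_self (by linarith [h1.1]) (by linarith [h1.1])
      linarith
    have hsumb : Summable fun i => 1 - a i := by
      apply Summable.of_nonneg_of_le (fun i => by linarith [ha1 i]) hub
      exact (hsumh.mul_left (2 * m))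
    have htb : (∑' i, (1 - a i)) ≤ 2 * m * ∫ t in Set.Ioi ((k : ℝ) - 1), h t := by
      calc (∑' i, (1 - a i)) ≤ ∑' i, 2 * m * h ((k + i : ℕ) : ℝ) :=
            Summable.tsum_le_tsum hub hsumb (hsumh.mul_left (2 * m))
        _ = 2 * m * ∑' i, h ((k + i : ℕ) : ℝ) := tsum_mul_left
        _ ≤ 2 * m * ∫ t in Set.Ioi ((k : ℝ) - 1), h t := by
            apply mul_le_mul_of_nonneg_left hbint (by linarith)
    by_cases hmul : Multipliable a
    · have hten : Filter.Tendsto (fun n => ∏ i ∈ range n, a i) Filter.atTop (nhds (∏' i, a i)) :=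
        hmul.hasProd.tendsto_prod_nat
      have hlb : 1 - (∑' i, (1 - a i)) ≤ ∏' i, a i := by
        apply ge_of_tendsto hten
        filter_upwards with n
        refine le_trans ?_ (weier a ha0 ha1 n)
        have := Summable.sum_le_tsum (range n) (fun i _ => by linarith [ha1 i]) hsumb
        linarith
      linarith
    · rw [tprod_eq_one_of_not_multipliable hmul]
      simp only [sub_self]
      exact mul_nonneg (by linarith) (hRHSnn _)
  -- Now assemble with M = 2m + 1 / ∫_{Ioi (-1)} h
  have hI0 : 0 < ∫ t in Set.Ioi (-1 : ℝ), h t := by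
    have h1le : h 1 ≤ ∫ t in Set.Ioc (0:ℝ) 1, h t := by
      have : ∫ t in Set.Ioc (0:ℝ) 1, h 1 ≤ ∫ t in Set.Ioc (0:ℝ) 1, h t := by
        apply setIntegral_mono_on (integrableOn_const (by simp))
          (hint.mono_set (fun x hx => by simp at hx ⊢; linarith [hx.1]))
          measurableSet_Ioc
        intro x hx
        exact hmono (Set.mem_Ici.2 hx.1.le) (Set.mem_Ici.2 zero_le_one) hx.2
      rw [setIntegral_const] at this
      simpa [Real.volume_Ioc] using this
    have hmono2 : ∫ t in Set.Ioc (0:ℝ) 1, h t ≤ ∫ t in Set.Ioi (-1:ℝ), h t := by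
      apply setIntegral_mono_set hint (Filter.Eventually.of_forall fun t => hpos t)
      exact Filter.Eventually.of_forall (fun x hx => (show (-1:ℝ) < x by linarith [(show x ∈ Set.Ioc (0:ℝ) 1 from hx).1]))
    linarith
  refine ⟨2 * m + 1 / ∫ t in Set.Ioi (-1 : ℝ), h t, by
    have := hI0; positivity, ?_⟩
  intro k
  rcases Nat.eq_zero_or_pos k with hk | hk
  · subst hk
    -- LHS ≤ 1 ≤ (1/I₀) * I₀ ≤ M * I₀
    have htpnn : 0 ≤ ∏' i : ℕ, ((1 - u (0 + i)) / (1 + u (0 + i))) := by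
      by_cases hmul : Multipliable fun i : ℕ => ((1 - u (0 + i)) / (1 + u (0 + i)))
      · refine ge_of_tendsto hmul.hasProd.tendsto_prod_nat ?_
        filter_upwards with n
        refine Finset.prod_nonneg fun i _ => ?_
        have := hu (0 + i)
        exact div_nonneg (by linarith [this.2]) (by linarith [this.1])
      · rw [tprod_eq_one_of_not_multipliable hmul]; norm_num
    have hcast : ((0:ℕ):ℝ) - 1 = -1 := by norm_num
    rw [hcast]
    have h2 : (1:ℝ) ≤ (2 * m + 1 / ∫ t in Set.Ioi (-1 : ℝ), h t) * ∫ t in Set.Ioi (-1 : ℝ), h t := by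
      rw [add_mul, one_div, inv_mul_cancel₀ (ne_of_gt hI0)]
      nlinarith [hRHSnn (-1:ℝ)]
    linarith
  · have := main k hk
    have hnn := hRHSnn ((k:ℝ) - 1)
    have hfrac : 0 ≤ 1 / ∫ t in Set.Ioi (-1 : ℝ), h t := by positivity
    nlinarith
end

section
/- Let (u_i) be a sequence in (0,1) with u_i ≤ C·a^{−i} for some C > 0 and a > 1. Then there exists M ≥ 0 such that 1 − Π_{i=k}^∞ (1−u_i)/(1+u_i) ≤ M·a^{−k} for all k ≥ 0. -/
/-!
Each factor `(1 - u) / (1 + u)` lies in `[0, 1]` and falls short of `1` by `2u / (1 + u) ≤ 2u`.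
Since `1 - ∏ pᵢ ≤ ∑ (1 - pᵢ)` for factors in `[0, 1]`, the defect of the tail product from `k` on
is at most `2 ∑_{i ≥ k} C a⁻ⁱ = 2C a⁻ᵏ / (1 - a⁻¹)`.
-/

open Finset

theorem one_sub_prod_le_sum_one_sub {ι : Type*} (s : Finset ι) {p : ι → ℝ}
    (hp0 : ∀ i, 0 ≤ p i) (hp1 : ∀ i, p i ≤ 1) :
    1 - ∏ i ∈ s, p i ≤ ∑ i ∈ s, (1 - p i) := by
  classical
  induction s using Finset.induction_on with
  | empty => simp
  | insert j s hj ih =>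
    rw [prod_insert hj, sum_insert hj]
    have hP1 : ∏ i ∈ s, p i ≤ 1 := prod_le_one (fun i _ => hp0 i) (fun i _ => hp1 i)
    have : p j * (1 - ∏ i ∈ s, p i) ≤ 1 - ∏ i ∈ s, p i :=
      mul_le_of_le_one_left (sub_nonneg.2 hP1) (hp1 j)
    linarith

theorem one_sub_tprod_le_tsum_one_sub {ι : Type*} {p : ι → ℝ}
    (hp0 : ∀ i, 0 ≤ p i) (hp1 : ∀ i, p i ≤ 1) (hs : Summable fun i => 1 - p i) :
    1 - ∏' i, p i ≤ ∑' i, (1 - p i) := by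
  by_cases hp : Multipliable p
  · refine le_of_tendsto' (tendsto_const_nhds.sub hp.hasProd) fun s => ?_
    exact (one_sub_prod_le_sum_one_sub s hp0 hp1).trans
      (hs.sum_le_tsum s fun i _ => sub_nonneg.2 (hp1 i))
  · rw [tprod_eq_one_of_not_multipliable hp, sub_self]
    exact tsum_nonneg fun i => sub_nonneg.2 (hp1 i)

section Cayley

variable {x : ℝ}

theorem one_sub_div_one_add_nonneg (hx0 : 0 ≤ x) (hx1 : x ≤ 1) : 0 ≤ (1 - x) / (1 + x) :=
  div_nonneg (by linarith) (by linarith)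

theorem one_sub_div_one_add_le_one (hx : 0 ≤ x) : (1 - x) / (1 + x) ≤ 1 :=
  div_le_one_of_le₀ (by linarith) (by linarith)

theorem one_sub_one_sub_div_one_add_le (hx : 0 ≤ x) : 1 - (1 - x) / (1 + x) ≤ 2 * x := by
  have hdefect : 1 - (1 - x) / (1 + x) = 2 * x / (1 + x) := by
    field_simp
    ring
  rw [hdefect]
  exact div_le_self (by linarith) (by linarith)

end Cayley

theorem stmt6 (u : ℕ → ℝ) (C a : ℝ) (hC : 0 < C) (ha : 1 < a)
    (hu : ∀ i, u i ∈ Set.Ioo (0:ℝ) 1)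
    (hbound : ∀ i : ℕ, u i ≤ C * a ^ (-(i:ℝ))) :
    ∃ M : ℝ, 0 ≤ M ∧ ∀ k : ℕ,
      1 - ∏' i : ℕ, ((1 - u (k + i)) / (1 + u (k + i))) ≤ M * a ^ (-(k:ℝ)) := by
  have hr0 : 0 ≤ a⁻¹ := inv_nonneg.2 (zero_le_one.trans ha.le)
  have hr1 : a⁻¹ < 1 := inv_lt_one_of_one_lt₀ ha
  have hpow : ∀ n : ℕ, a ^ (-(n:ℝ)) = a⁻¹ ^ n := fun n => by
    rw [Real.rpow_neg_natCast, zpow_neg, zpow_natCast, inv_pow]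
  refine ⟨2 * C * (1 - a⁻¹)⁻¹, by have := sub_pos.2 hr1; positivity, fun k => ?_⟩
  have hdefect : ∀ i, 1 - (1 - u (k + i)) / (1 + u (k + i)) ≤ 2 * C * a⁻¹ ^ k * a⁻¹ ^ i :=
    fun i => by
      have := hbound (k + i)
      rw [hpow, pow_add] at this
      linarith [one_sub_one_sub_div_one_add_le (hu (k + i)).1.le]
  have hgeom : Summable fun i : ℕ => 2 * C * a⁻¹ ^ k * a⁻¹ ^ i :=
    (summable_geometric_of_lt_one hr0 hr1).mul_left _
  have hsum : Summable fun i => 1 - (1 - u (k + i)) / (1 + u (k + i)) :=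
    hgeom.of_nonneg_of_le
      (fun i => sub_nonneg.2 (one_sub_div_one_add_le_one (hu (k + i)).1.le)) hdefect
  calc 1 - ∏' i : ℕ, ((1 - u (k + i)) / (1 + u (k + i)))
      ≤ ∑' i, (1 - (1 - u (k + i)) / (1 + u (k + i))) :=
        one_sub_tprod_le_tsum_one_sub
          (fun i => one_sub_div_one_add_nonneg (hu (k + i)).1.le (hu (k + i)).2.le)
          (fun i => one_sub_div_one_add_le_one (hu (k + i)).1.le) hsum
    _ ≤ ∑' i, 2 * C * a⁻¹ ^ k * a⁻¹ ^ i := hsum.tsum_le_tsum hdefect hgeom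
    _ = 2 * C * (1 - a⁻¹)⁻¹ * a ^ (-(k:ℝ)) := by
        rw [tsum_mul_left, tsum_geometric_of_lt_one hr0 hr1, hpow]
        ring
end

section
/- Let E be a measurable space with probability measures and suppose ρ_i, ρ_j : Ω → (0,∞) are measurable functions on Ω ⊆ E^{ℤ^d} satisfying: normalization λ_i(ρ_i) = 1 and λ_j(ρ_j) = 1 on Ω, and order-consistency ρ_i / λ_i(ρ_i ρ_j⁻¹) = ρ_j / λ_j(ρ_j ρ_i⁻¹) =: ρ_{ij} on Ω, where λ_i denotes integration of the i-th coordinate against an a-priori measure λ^i (leaving other coordinates fixed). Then the kernel ρ_{ij} λ_{ij} (where λ_{ij} = λ_i λ_j integrates coordinates i and j) satisfies (ρ_{ij} λ_{ij})(ρ_i λ_i (h)) = (ρ_{ij} λ_{ij})(h) for every bounded measurable h. -/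
/-!
Fix the coordinates outside `{i, j}`. Order-consistency makes `ρ_{ij}(·, y)` a multiple of the
probability density `ρ_i(·, y)` for every `y`, so for each `y` the `ρ_i λ_i`-average of `h` and `h`
itself have the same `ρ_{ij} λ_i`-integral; it remains to integrate the `i`-coordinate first.
Fubini applies because `ρ_{ij}(x, ·) = w(x) ρ_j(x, ·)` with `ρ_j(x, ·)` a probability density and
`w ∝ (ρ_i / ρ_j)(·, y₀)` for a fixed `y₀`, which is `λ_i`-integrable since `λ_i(ρ_i ρ_j⁻¹) > 0`.
-/

open MeasureTheory

section Density

variable {α : Type*} [MeasurableSpace α] {μ : Measure α}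

lemma norm_integral_mul_le_of_integral_eq_one {p g : α → ℝ} {C : ℝ} (hp_nonneg : ∀ x, 0 ≤ p x)
    (hp : ∫ x, p x ∂μ = 1) (hg : ∀ x, ‖g x‖ ≤ C) : ‖∫ x, p x * g x ∂μ‖ ≤ C := by
  have hp_int : Integrable p μ := .of_integral_ne_zero (by rw [hp]; exact one_ne_zero)
  calc ‖∫ x, p x * g x ∂μ‖ ≤ ∫ x, p x * C ∂μ :=
        norm_integral_le_of_norm_le (hp_int.mul_const C) (ae_of_all _ fun x => by
          rw [norm_mul, Real.norm_of_nonneg (hp_nonneg x)]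
          exact mul_le_mul_of_nonneg_left (hg x) (hp_nonneg x))
    _ = C := by rw [integral_mul_const, hp, one_mul]

lemma integral_div_mul_integral_mul_eq {p : α → ℝ} (hp : ∫ x, p x ∂μ = 1) (d : ℝ) (g : α → ℝ) :
    ∫ x, p x / d * ∫ x', p x' * g x' ∂μ ∂μ = ∫ x, p x / d * g x ∂μ := by
  simp only [div_mul_eq_mul_div, integral_div, integral_mul_const, hp, one_mul]

end Density

section Product

variable {X Y : Type*} [MeasurableSpace X] [MeasurableSpace Y] {μ : Measure X} {ν : Measure Y}

lemma integrable_prod_mul_of_integral_eq_one [SFinite ν] {w : X → ℝ} {q : X × Y → ℝ}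
    (hw : Integrable w μ) (hq_meas : Measurable q) (hq_nonneg : ∀ z, 0 ≤ q z)
    (hq : ∀ x, ∫ y, q (x, y) ∂ν = 1) : Integrable (fun z => w z.1 * q z) (μ.prod ν) := by
  refine (integrable_prod_iff (hw.aestronglyMeasurable.comp_fst.mul
    hq_meas.aestronglyMeasurable)).2 ⟨ae_of_all _ fun x => ?_, ?_⟩
  · exact (Integrable.of_integral_ne_zero (by rw [hq x]; exact one_ne_zero)).const_mul (w x)
  · refine hw.norm.congr (ae_of_all _ fun x => ?_)
    simp only [Pi.mul_apply, norm_mul, Real.norm_of_nonneg (hq_nonneg _), integral_const_mul,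
      hq x, mul_one]

lemma integral_integral_mul_integral_eq [SFinite μ] [SFinite ν] {p r g : X × Y → ℝ} {D : Y → ℝ}
    {C : ℝ} (hr : Integrable r (μ.prod ν)) (hp_meas : Measurable p) (hp_nonneg : ∀ z, 0 ≤ p z)
    (hp : ∀ y, ∫ x, p (x, y) ∂μ = 1) (hrp : ∀ x y, r (x, y) = p (x, y) / D y)
    (hg_meas : Measurable g) (hg : ∀ z, ‖g z‖ ≤ C) :
    ∫ x, ∫ y, r (x, y) * (∫ x', p (x', y) * g (x', y) ∂μ) ∂ν ∂μ
      = ∫ x, ∫ y, r (x, y) * g (x, y) ∂ν ∂μ := by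
  have hF_meas : StronglyMeasurable fun y => ∫ x, p (x, y) * g (x, y) ∂μ :=
    (hp_meas.mul hg_meas).stronglyMeasurable.integral_prod_left'
  have hrF : Integrable (fun z => r z * ∫ x, p (x, z.2) * g (x, z.2) ∂μ) (μ.prod ν) :=
    hr.mul_bdd (hF_meas.comp_measurable measurable_snd).aestronglyMeasurable (c := C)
      (ae_of_all _ fun z =>
        norm_integral_mul_le_of_integral_eq_one (fun _ => hp_nonneg _) (hp z.2) (fun _ => hg _))
  have hrg : Integrable (fun z => r z * g z) (μ.prod ν) :=
    hr.mul_bdd hg_meas.aestronglyMeasurable (ae_of_all _ hg)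
  calc ∫ x, ∫ y, r (x, y) * (∫ x', p (x', y) * g (x', y) ∂μ) ∂ν ∂μ
      = ∫ y, ∫ x, r (x, y) * (∫ x', p (x', y) * g (x', y) ∂μ) ∂μ ∂ν := integral_integral_swap hrF
    _ = ∫ y, ∫ x, r (x, y) * g (x, y) ∂μ ∂ν := by
        congr 1 with y
        simp only [hrp]
        exact integral_div_mul_integral_mul_eq (hp y) (D y) _
    _ = ∫ x, ∫ y, r (x, y) * g (x, y) ∂ν ∂μ := (integral_integral_swap hrg).symm

end Product

/-- The configuration space `E^{ℤ^d}` is split as `X × Y × Z` where `X` is the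
coordinate `i`, `Y` the coordinate `j` and `Z` the remaining coordinates;
`λ_i` (resp. `λ_j`) integrates the first (resp. second) coordinate against the
a-priori measure `μ` (resp. `ν`), leaving the other coordinates fixed. -/
theorem stmt15_general {X Y Z : Type*} [MeasurableSpace X] [MeasurableSpace Y] [MeasurableSpace Z]
    (μ : Measure X) (ν : Measure Y) [SigmaFinite μ] [SigmaFinite ν]
    (ρi ρj : X × Y × Z → ℝ)
    (hρi : Measurable ρi) (hρj : Measurable ρj)
    (hρipos : ∀ ω, 0 < ρi ω) (hρjpos : ∀ ω, 0 < ρj ω)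
    -- normalization: λ_i(ρ_i) = 1 and λ_j(ρ_j) = 1
    (hnormi : ∀ ω : X × Y × Z, ∫ x, ρi (x, ω.2) ∂μ = 1)
    (hnormj : ∀ ω : X × Y × Z, ∫ y, ρj (ω.1, y, ω.2.2) ∂ν = 1)
    -- bounded positivity: 0 < inf λ_j(ρ_j ρ_i⁻¹), sup λ_j(ρ_j ρ_i⁻¹) < ∞, and symmetrically
    (hbp3 : ∃ c > (0:ℝ), ∀ ω : X × Y × Z,
      c ≤ ∫ x, ρi (x, ω.2) / ρj (x, ω.2) ∂μ)
    -- order-consistency: ρ_{ij} = ρ_i / λ_i(ρ_i ρ_j⁻¹) = ρ_j / λ_j(ρ_j ρ_i⁻¹)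
    (ρij : X × Y × Z → ℝ)
    (hoc1 : ∀ ω : X × Y × Z, ρij ω = ρi ω / ∫ x, ρi (x, ω.2) / ρj (x, ω.2) ∂μ)
    (hoc2 : ∀ ω : X × Y × Z, ρij ω = ρj ω / ∫ y, ρj (ω.1, y, ω.2.2) / ρi (ω.1, y, ω.2.2) ∂ν)
    (h : X × Y × Z → ℝ) (hmeas : Measurable h) (hbdd : ∃ C, ∀ ω, |h ω| ≤ C) :
    -- (ρ_{ij} λ_{ij})((ρ_i λ_i)(h)) = (ρ_{ij} λ_{ij})(h)
    ∀ ω : X × Y × Z,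
      (∫ x, ∫ y, ρij (x, y, ω.2.2) *
          (∫ x', ρi (x', y, ω.2.2) * h (x', y, ω.2.2) ∂μ) ∂ν ∂μ)
        = ∫ x, ∫ y, ρij (x, y, ω.2.2) * h (x, y, ω.2.2) ∂ν ∂μ := by
  rintro ⟨a, b, z⟩
  obtain ⟨c, hc, hD⟩ := hbp3
  obtain ⟨C, hC⟩ := hbdd
  have hemb : Measurable fun q : X × Y => (q.1, q.2, z) := by fun_prop
  have hD_ne : ∫ x, ρi (x, b, z) / ρj (x, b, z) ∂μ ≠ 0 := (hc.trans_le (hD (a, b, z))).ne'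
  have hw : Integrable (fun x => ρi (x, b, z) / ρj (x, b, z) / ∫ x, ρi (x, b, z) / ρj (x, b, z) ∂μ)
      μ := (Integrable.of_integral_ne_zero hD_ne).div_const _
  have hρij : (fun q : X × Y => ρij (q.1, q.2, z)) = fun q =>
      ρi (q.1, b, z) / ρj (q.1, b, z) / (∫ x, ρi (x, b, z) / ρj (x, b, z) ∂μ) * ρj (q.1, q.2, z) := by
    ext ⟨x, y⟩
    have hb := (hoc1 (x, b, z)).symm.trans (hoc2 (x, b, z))
    rw [hoc2 (x, y, z), div_right_comm _ (ρj _), hb, div_div_cancel_left' (hρjpos _).ne',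
      div_eq_inv_mul]
  refine integral_integral_mul_integral_eq (p := fun q => ρi (q.1, q.2, z))
    (r := fun q => ρij (q.1, q.2, z)) (D := fun y => ∫ x, ρi (x, y, z) / ρj (x, y, z) ∂μ) ?_
    (hρi.comp hemb) (fun _ => (hρipos _).le) (fun y => hnormi (a, y, z))
    (fun x y => hoc1 (x, y, z)) (hmeas.comp hemb) (fun _ => hC _)
  rw [hρij]
  exact integrable_prod_mul_of_integral_eq_one hw (hρj.comp hemb) (fun _ => (hρjpos _).le)
    fun x => hnormj (x, b, z)

/-- Initial inductive step (I5, |Λ∪Γ| = 2) of the reconstruction theorem.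
The configuration space `E^{ℤ^d}` is split as `X × Y × Z` where `X` is the
coordinate `i`, `Y` the coordinate `j` and `Z` the remaining coordinates;
`λ_i` (resp. `λ_j`) integrates the first (resp. second) coordinate against the
a-priori measure `μ` (resp. `ν`), leaving the other coordinates fixed. -/
theorem stmt15 {X Y Z : Type*} [MeasurableSpace X] [MeasurableSpace Y] [MeasurableSpace Z]
    (μ : Measure X) (ν : Measure Y) [SigmaFinite μ] [SigmaFinite ν]
    (ρi ρj : X × Y × Z → ℝ)
    (hρi : Measurable ρi) (hρj : Measurable ρj)
    (hρipos : ∀ ω, 0 < ρi ω) (hρjpos : ∀ ω, 0 < ρj ω)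
    -- normalization: λ_i(ρ_i) = 1 and λ_j(ρ_j) = 1
    (hnormi : ∀ ω : X × Y × Z, ∫ x, ρi (x, ω.2) ∂μ = 1)
    (hnormj : ∀ ω : X × Y × Z, ∫ y, ρj (ω.1, y, ω.2.2) ∂ν = 1)
    -- bounded positivity: 0 < inf λ_j(ρ_j ρ_i⁻¹), sup λ_j(ρ_j ρ_i⁻¹) < ∞, and symmetrically
    (hbp1 : ∃ c > (0:ℝ), ∀ ω : X × Y × Z,
      c ≤ ∫ y, ρj (ω.1, y, ω.2.2) / ρi (ω.1, y, ω.2.2) ∂ν)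
    (hbp2 : ∃ c' : ℝ, ∀ ω : X × Y × Z,
      (∫ y, ρj (ω.1, y, ω.2.2) / ρi (ω.1, y, ω.2.2) ∂ν) ≤ c')
    (hbp3 : ∃ c > (0:ℝ), ∀ ω : X × Y × Z,
      c ≤ ∫ x, ρi (x, ω.2) / ρj (x, ω.2) ∂μ)
    (hbp4 : ∃ c' : ℝ, ∀ ω : X × Y × Z,
      (∫ x, ρi (x, ω.2) / ρj (x, ω.2) ∂μ) ≤ c')
    -- order-consistency: ρ_{ij} = ρ_i / λ_i(ρ_i ρ_j⁻¹) = ρ_j / λ_j(ρ_j ρ_i⁻¹)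
    (ρij : X × Y × Z → ℝ)
    (hoc1 : ∀ ω : X × Y × Z, ρij ω = ρi ω / ∫ x, ρi (x, ω.2) / ρj (x, ω.2) ∂μ)
    (hoc2 : ∀ ω : X × Y × Z, ρij ω = ρj ω / ∫ y, ρj (ω.1, y, ω.2.2) / ρi (ω.1, y, ω.2.2) ∂ν)
    (h : X × Y × Z → ℝ) (hmeas : Measurable h) (hbdd : ∃ C, ∀ ω, |h ω| ≤ C) :
    -- (ρ_{ij} λ_{ij})((ρ_i λ_i)(h)) = (ρ_{ij} λ_{ij})(h)
    ∀ ω : X × Y × Z,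
      (∫ x, ∫ y, ρij (x, y, ω.2.2) *
          (∫ x', ρi (x', y, ω.2.2) * h (x', y, ω.2.2) ∂μ) ∂ν ∂μ)
        = ∫ x, ∫ y, ρij (x, y, ω.2.2) * h (x, y, ω.2.2) ∂ν ∂μ :=
  stmt15_general μ ν ρi ρj hρi hρj hρipos hρjpos hnormi hnormj hbp3 ρij hoc1 hoc2 h hmeas hbdd
end

section
/- Let γ be a Markov kernel family with the consistency property and suppose there exist a constant K > 0, a measurable set A, indices n ≤ p, and a fixed point σ such that γ_{[n,p]}(A|ξ) ≥ K·γ_{[n,p]}(A|η) for all ξ, η. Then for every k ≥ 0, the composed kernels satisfy γ_{[n,p+k]}(A|ξ) ≥ K²·γ_{[n,p+k]}(A|η) for all ξ, η, where γ_{[n,p+k]}(A|ξ) = ∫ γ_{[n,p]}(A|ω) γ_{[n,p+k]}(dω|ξ) by consistency. -/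
/-! Consistency writes `γ_{[n,p+k]}(A|ξ)` as the average of `ω ↦ γ_{[n,p]}(A|ω)` against the
probability measure `γ_{[n,p+k]}(·|ξ)`. Boundary-uniformity with constant `K` traps every value
`γ_{[n,p]}(A|ω)` between `K·γ_{[n,p]}(A|σ)` and `K⁻¹·γ_{[n,p]}(A|σ)` for a fixed reference
point `σ`, so the averages at `ξ` and at `η` inherit these bounds, and comparing them costs `K²`. -/

open MeasureTheory ProbabilityTheory ENNReal

namespace ProbabilityTheory.Kernel

variable {α β γ : Type*} [MeasurableSpace α] [MeasurableSpace β] [MeasurableSpace γ]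
  {κ : Kernel β γ} {L : Kernel α β} {s : Set γ}

def IsBoundaryUniform (κ : Kernel β γ) (s : Set γ) (K : ℝ≥0∞) : Prop :=
  ∀ b b', K * κ b' s ≤ κ b s

lemma le_comp_apply_of_forall_le [IsMarkovKernel L] (hs : MeasurableSet s) {c : ℝ≥0∞}
    (h : ∀ b, c ≤ κ b s) (a : α) : c ≤ (κ ∘ₖ L) a s := by
  rw [comp_apply' _ _ _ hs]
  calc c = ∫⁻ _, c ∂(L a) := by simp
    _ ≤ ∫⁻ b, κ b s ∂(L a) := lintegral_mono h

lemma const_mul_comp_apply_le [IsMarkovKernel L] (hs : MeasurableSet s) {c d : ℝ≥0∞}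
    (h : ∀ b, c * κ b s ≤ d) (a : α) : c * (κ ∘ₖ L) a s ≤ d := by
  rw [comp_apply' _ _ _ hs, ← lintegral_const_mul c (κ.measurable_coe hs)]
  calc ∫⁻ b, c * κ b s ∂(L a) ≤ ∫⁻ _, d ∂(L a) := lintegral_mono h
    _ = d := by simp

theorem IsBoundaryUniform.comp [IsMarkovKernel L] {K : ℝ≥0∞} (hκ : IsBoundaryUniform κ s K)
    (hs : MeasurableSet s) (σ : β) : IsBoundaryUniform (κ ∘ₖ L) s (K ^ 2) := fun a a' =>
  calc K ^ 2 * (κ ∘ₖ L) a' s = K * (K * (κ ∘ₖ L) a' s) := by ring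
    _ ≤ K * κ σ s := by gcongr; exact const_mul_comp_apply_le hs (hκ σ) a'
    _ ≤ (κ ∘ₖ L) a s := le_comp_apply_of_forall_le hs (hκ · σ) a

end ProbabilityTheory.Kernel

theorem stmt19_general {Ω : Type*} [MeasurableSpace Ω]
    (κ : Kernel Ω Ω) (κ' : ℕ → Kernel Ω Ω)
    (hmk : ∀ k, IsMarkovKernel (κ' k))
    (hcons : ∀ k, κ ∘ₖ (κ' k) = κ' k)
    (A : Set Ω) (hA : MeasurableSet A)
    (K : ℝ≥0∞)
    (hunif : ∀ ξ η : Ω, K * κ η A ≤ κ ξ A) :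
    ∀ (k : ℕ) (ξ η : Ω), K ^ 2 * (κ' k) η A ≤ (κ' k) ξ A := by
  intro k ξ η
  have := hmk k
  rw [← hcons k]
  exact Kernel.IsBoundaryUniform.comp (L := κ' k) hunif hA ξ ξ η

theorem stmt19 {Ω : Type*} [MeasurableSpace Ω]
    (κ : Kernel Ω Ω) (κ' : ℕ → Kernel Ω Ω)
    [IsMarkovKernel κ] (hmk : ∀ k, IsMarkovKernel (κ' k))
    (hcons : ∀ k, κ ∘ₖ (κ' k) = κ' k)
    (A : Set Ω) (hA : MeasurableSet A)
    (K : ℝ≥0∞) (hK : 0 < K)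
    (hunif : ∀ ξ η : Ω, K * κ η A ≤ κ ξ A) :
    ∀ (k : ℕ) (ξ η : Ω), K ^ 2 * (κ' k) η A ≤ (κ' k) ξ A :=
  stmt19_general κ κ' hmk hcons A hA K hunif
end
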